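/- arXiv:2206.04338 — 2 statements merged into one kernel-verified Lean document; each statement's English description precedes it below -/
import Mathlib

section
/- Let d ≥ 1, let ρ : ℝ^d × [0,1] → ℝ be smooth and strictly positive, let S : ℝ^d × [0,1] → ℝ be smooth, and set ψ := ρ^{1/2} exp(iS). Then at every point (x,t) the free Schrödinger equation i ∂_t ψ + (1/2) Δψ = 0 holds if and only if the two Madelung equations hold at (x,t): (i) ∂_t ρ + ∇·(ρ ∇S) = 0 and (ii) ∂_t S + (1/2)|∇S|² − (1/2) (Δ√ρ)/√ρ = 0. -/
open MeasureTheory Filter Topology Complex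

noncomputable section

/-- `i`-th spatial partial derivative of a real-valued function. -/
def pd {d : ℕ} (f : (Fin d → ℝ) → ℝ) (x : Fin d → ℝ) (i : Fin d) : ℝ :=
  fderiv ℝ f x (Pi.single i 1)

/-- Spatial divergence of a vector field on `ℝ^d`. -/
def sdiv {d : ℕ} (w : (Fin d → ℝ) → Fin d → ℝ) (x : Fin d → ℝ) : ℝ :=
  ∑ i, fderiv ℝ (fun y => w y i) x (Pi.single i 1)

/-- Spatial Laplacian of a real-valued function on `ℝ^d`. -/
def slap {d : ℕ} (f : (Fin d → ℝ) → ℝ) (x : Fin d → ℝ) : ℝ :=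
  ∑ i, fderiv ℝ (fun y => pd f y i) x (Pi.single i 1)

/-- Spatial Laplacian of a complex-valued function on `ℝ^d`. -/
def slapC {d : ℕ} (f : (Fin d → ℝ) → ℂ) (x : Fin d → ℝ) : ℂ :=
  ∑ i, fderiv ℝ (fun y => fderiv ℝ f y (Pi.single i 1)) x (Pi.single i 1)

section Aux

variable {E : Type*} [NormedAddCommGroup E] [NormedSpace ℝ E]

lemma hasFDerivAt_expI {g : E → ℝ} {g' : E →L[ℝ] ℝ} {y : E} (hg : HasFDerivAt g g' y) :
    HasFDerivAt (fun z => Complex.exp (Complex.I * g z))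
      ((Complex.exp (Complex.I * g y) * Complex.I) • ((Complex.ofRealCLM : ℝ →L[ℝ] ℂ).comp g')) y := by
  have h1 : HasFDerivAt (fun z => ((g z : ℝ) : ℂ)) ((Complex.ofRealCLM : ℝ →L[ℝ] ℂ).comp g') y :=
    Complex.ofRealCLM.hasFDerivAt.comp y hg
  have h2 : HasFDerivAt (fun z => Complex.I * (g z : ℂ))
      (Complex.I • ((Complex.ofRealCLM : ℝ →L[ℝ] ℂ).comp g')) y := h1.const_mul _
  have h3 := (Complex.hasDerivAt_exp (Complex.I * g y)).comp_hasFDerivAt y h2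
  refine h3.congr_fderiv ?_
  ext v
  simp [smul_smul]
  try ring

lemma hasFDerivAt_mul_expI {h : E → ℂ} {h' : E →L[ℝ] ℂ} {g : E → ℝ} {g' : E →L[ℝ] ℝ} {y : E}
    (hh : HasFDerivAt h h' y) (hg : HasFDerivAt g g' y) :
    HasFDerivAt (fun z => h z * Complex.exp (Complex.I * g z))
      (Complex.exp (Complex.I * g y) • h'
        + (h y * Complex.exp (Complex.I * g y) * Complex.I) • ((Complex.ofRealCLM : ℝ →L[ℝ] ℂ).comp g')) y := by
  have := hh.mul (hasFDerivAt_expI hg)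
  refine this.congr_fderiv ?_
  ext v
  simp [smul_smul]
  try ring

lemma fderiv_mul_expI_apply {h : E → ℂ} {h' : E →L[ℝ] ℂ} {g : E → ℝ} {g' : E →L[ℝ] ℝ} {y : E}
    (hh : HasFDerivAt h h' y) (hg : HasFDerivAt g g' y) (v : E) :
    fderiv ℝ (fun z => h z * Complex.exp (Complex.I * g z)) y v
      = (h' v + h y * Complex.I * g' v) * Complex.exp (Complex.I * g y) := by
  rw [(hasFDerivAt_mul_expI hh hg).fderiv]
  simp
  try ring

lemma fderiv_real_mul_expI_apply {f g : E → ℝ} {y : E}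
    (hf : DifferentiableAt ℝ f y) (hg : DifferentiableAt ℝ g y) (v : E) :
    fderiv ℝ (fun z => (f z : ℂ) * Complex.exp (Complex.I * g z)) y v
      = ((fderiv ℝ f y v : ℂ) + (f y : ℂ) * Complex.I * (fderiv ℝ g y v : ℂ))
          * Complex.exp (Complex.I * g y) := by
  have hh : HasFDerivAt (fun z => ((f z : ℝ) : ℂ))
      ((Complex.ofRealCLM : ℝ →L[ℝ] ℂ).comp (fderiv ℝ f y)) y :=
    Complex.ofRealCLM.hasFDerivAt.comp y hf.hasFDerivAt
  simpa using fderiv_mul_expI_apply hh hg.hasFDerivAt v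

lemma fderiv_ab_mul_expI_apply {a b g : E → ℝ} {y : E}
    (ha : DifferentiableAt ℝ a y) (hb : DifferentiableAt ℝ b y)
    (hg : DifferentiableAt ℝ g y) (v : E) :
    fderiv ℝ (fun z => ((a z : ℂ) + Complex.I * (b z : ℂ)) * Complex.exp (Complex.I * g z)) y v
      = ((fderiv ℝ a y v : ℂ) + Complex.I * (fderiv ℝ b y v : ℂ)
          + ((a y : ℂ) + Complex.I * (b y : ℂ)) * Complex.I * (fderiv ℝ g y v : ℂ))
          * Complex.exp (Complex.I * g y) := by
  have hha : HasFDerivAt (fun z => ((a z : ℝ) : ℂ))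
      ((Complex.ofRealCLM : ℝ →L[ℝ] ℂ).comp (fderiv ℝ a y)) y :=
    Complex.ofRealCLM.hasFDerivAt.comp y ha.hasFDerivAt
  have hhb0 : HasFDerivAt (fun z => ((b z : ℝ) : ℂ))
      ((Complex.ofRealCLM : ℝ →L[ℝ] ℂ).comp (fderiv ℝ b y)) y :=
    Complex.ofRealCLM.hasFDerivAt.comp y hb.hasFDerivAt
  have hhb : HasFDerivAt (fun z => Complex.I * ((b z : ℝ) : ℂ))
      (Complex.I • ((Complex.ofRealCLM : ℝ →L[ℝ] ℂ).comp (fderiv ℝ b y))) y := hhb0.const_mul _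
  have hh := hha.add hhb
  have := fderiv_mul_expI_apply hh hg.hasFDerivAt v
  simpa [smul_eq_mul] using this

lemma deriv_real_mul_expI {f g : ℝ → ℝ} {t : ℝ}
    (hf : DifferentiableAt ℝ f t) (hg : DifferentiableAt ℝ g t) :
    deriv (fun s => (f s : ℂ) * Complex.exp (Complex.I * g s)) t
      = (((deriv f t : ℝ) : ℂ) + (f t : ℂ) * Complex.I * ((deriv g t : ℝ) : ℂ))
          * Complex.exp (Complex.I * g t) := by
  rw [← fderiv_apply_one_eq_deriv, fderiv_real_mul_expI_apply hf hg 1]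
  simp [fderiv_apply_one_eq_deriv]


lemma combineC (a b c u v : ℝ) (E : ℂ) :
    Complex.I * ((((a : ℝ) : ℂ) + ((b : ℝ) : ℂ) * Complex.I * ((c : ℝ) : ℂ)) * E)
      + (1/2 : ℂ) * ((((u : ℝ) : ℂ) + ((v : ℝ) : ℂ) * Complex.I) * E)
    = ((((-(b * c) + (1/2) * u : ℝ)) : ℂ) + (((a + (1/2) * v : ℝ)) : ℂ) * Complex.I) * E := by
  push_cast
  linear_combination (E * (b : ℂ) * (c : ℂ)) * Complex.I_sq

lemma splitC (A B : ℝ) : (((A : ℝ) : ℂ) + ((B : ℝ) : ℂ) * Complex.I = 0) ↔ (A = 0 ∧ B = 0) := by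
  constructor
  · intro h
    constructor
    · simpa using congrArg Complex.re h
    · simpa using congrArg Complex.im h
  · rintro ⟨h1, h2⟩
    rw [h1, h2]
    simp

end Aux

/-- for smooth strictly positive `ρ` and smooth `S`, with
`ψ = √ρ · exp(i S)`, the free Schrödinger equation `i ∂ₜψ + ½ Δψ = 0` holds at a
point `(x,t)`, `t ∈ [0,1]`, iff the two Madelung equations hold at `(x,t)`. -/
theorem schroedinger_iff_madelung {d : ℕ} (hd : 1 ≤ d)
    (ρ : (Fin d → ℝ) → ℝ → ℝ) (S : (Fin d → ℝ) → ℝ → ℝ)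
    (hρ : ContDiff ℝ (⊤ : ℕ∞) (fun p : (Fin d → ℝ) × ℝ => ρ p.1 p.2))
    (hρpos : ∀ x t, 0 < ρ x t)
    (hS : ContDiff ℝ (⊤ : ℕ∞) (fun p : (Fin d → ℝ) × ℝ => S p.1 p.2))
    (ψ : (Fin d → ℝ) → ℝ → ℂ)
    (hψ : ψ = fun x t => (Real.sqrt (ρ x t) : ℂ) * Complex.exp (Complex.I * (S x t : ℂ)))
    (x : Fin d → ℝ) (t : ℝ) (ht : t ∈ Set.Icc (0:ℝ) 1) :
    (Complex.I * deriv (fun s => ψ x s) t + (1/2 : ℂ) * slapC (fun z => ψ z t) x = 0)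
      ↔
    ((deriv (fun s => ρ x s) t
        + sdiv (fun y i => ρ y t * pd (fun z => S z t) y i) x = 0)
      ∧
     (deriv (fun s => S x s) t
        + (1/2) * ∑ i, (pd (fun z => S z t) x i)^2
        - (1/2) * (slap (fun z => Real.sqrt (ρ z t)) x / Real.sqrt (ρ x t)) = 0)) := by
  subst hψ
  -- smoothness of slices
  have hρxC : ContDiff ℝ (⊤ : ℕ∞) (fun y : Fin d → ℝ => ρ y t) := hρ.comp (contDiff_id.prodMk contDiff_const)
  have hSxC : ContDiff ℝ (⊤ : ℕ∞) (fun y : Fin d → ℝ => S y t) := hS.comp (contDiff_id.prodMk contDiff_const)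
  have hρtC : ContDiff ℝ (⊤ : ℕ∞) (fun s : ℝ => ρ x s) := hρ.comp (contDiff_const.prodMk contDiff_id)
  have hStC : ContDiff ℝ (⊤ : ℕ∞) (fun s : ℝ => S x s) := hS.comp (contDiff_const.prodMk contDiff_id)
  have hFC : ∀ y, ContDiffAt ℝ (⊤ : ℕ∞) (fun z : Fin d → ℝ => Real.sqrt (ρ z t)) y := fun y =>
    (Real.contDiffAt_sqrt (hρpos y t).ne').comp y hρxC.contDiffAt
  have hFd : ∀ y, DifferentiableAt ℝ (fun z : Fin d → ℝ => Real.sqrt (ρ z t)) y := fun y =>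
    (hFC y).differentiableAt (by simp)
  have hgd : ∀ y, DifferentiableAt ℝ (fun z : Fin d → ℝ => S z t) y := fun y =>
    (hSxC.differentiable (by simp)) y
  have hρd : ∀ y, DifferentiableAt ℝ (fun z : Fin d → ℝ => ρ z t) y := fun y =>
    (hρxC.differentiable (by simp)) y
  have hFdd : ∀ i : Fin d, DifferentiableAt ℝ
      (fun y => fderiv ℝ (fun z : Fin d → ℝ => Real.sqrt (ρ z t)) y (Pi.single i 1)) x := by
    intro i
    have h1 : ContDiffAt ℝ 1 (fderiv ℝ (fun z : Fin d → ℝ => Real.sqrt (ρ z t))) x :=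
      (hFC x).fderiv_right (WithTop.coe_le_coe.mpr le_top)
    exact (h1.clm_apply contDiffAt_const).differentiableAt one_ne_zero
  have hgdd : ∀ i : Fin d, DifferentiableAt ℝ
      (fun y => fderiv ℝ (fun z : Fin d → ℝ => S z t) y (Pi.single i 1)) x := by
    intro i
    have h1 : ContDiffAt ℝ 1 (fderiv ℝ (fun z : Fin d → ℝ => S z t)) x :=
      hSxC.contDiffAt.fderiv_right (WithTop.coe_le_coe.mpr le_top)
    exact (h1.clm_apply contDiffAt_const).differentiableAt one_ne_zero
  have hFtd : DifferentiableAt ℝ (fun s => Real.sqrt (ρ x s)) t :=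
    ((Real.contDiffAt_sqrt (hρpos x t).ne').comp t hρtC.contDiffAt).differentiableAt (by simp)
  have hStd : DifferentiableAt ℝ (fun s => S x s) t := (hStC.differentiable (by simp)) t
  have hρtd : DifferentiableAt ℝ (fun s => ρ x s) t := (hρtC.differentiable (by simp)) t
  have hF0pos : 0 < Real.sqrt (ρ x t) := Real.sqrt_pos.2 (hρpos x t)
  have hF0ne : Real.sqrt (ρ x t) ≠ 0 := hF0pos.ne'
  have hρ0 : ρ x t = Real.sqrt (ρ x t) * Real.sqrt (ρ x t) := (Real.mul_self_sqrt (hρpos x t).le).symm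
  have hI2 : (Complex.I) ^ 2 = -1 := Complex.I_sq
  simp only [slapC, slap, sdiv, pd]
  -- first spatial derivative of ψ(·,t)
  have hB1 : ∀ i : Fin d,
      (fun y => fderiv ℝ (fun z : Fin d → ℝ =>
          ((Real.sqrt (ρ z t) : ℝ) : ℂ) * Complex.exp (Complex.I * ((S z t : ℝ) : ℂ))) y (Pi.single i 1))
      = fun y => (((fderiv ℝ (fun z : Fin d → ℝ => Real.sqrt (ρ z t)) y (Pi.single i 1) : ℝ) : ℂ)
          + Complex.I * (((Real.sqrt (ρ y t) * fderiv ℝ (fun z : Fin d → ℝ => S z t) y (Pi.single i 1) : ℝ)) : ℂ))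
          * Complex.exp (Complex.I * ((S y t : ℝ) : ℂ)) := by
    intro i
    funext y
    rw [fderiv_real_mul_expI_apply (hFd y) (hgd y)]
    push_cast
    ring
  -- the mixed product rule for the "b"-function
  have hb : ∀ i : Fin d, fderiv ℝ (fun y => Real.sqrt (ρ y t)
        * fderiv ℝ (fun z : Fin d → ℝ => S z t) y (Pi.single i 1)) x (Pi.single i 1)
      = Real.sqrt (ρ x t) * fderiv ℝ (fun y => fderiv ℝ (fun z : Fin d → ℝ => S z t) y (Pi.single i 1)) x (Pi.single i 1)
        + fderiv ℝ (fun z : Fin d → ℝ => S z t) x (Pi.single i 1)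
          * fderiv ℝ (fun z : Fin d → ℝ => Real.sqrt (ρ z t)) x (Pi.single i 1) := by
    intro i
    rw [fderiv_fun_mul (hFd x) (hgdd i)]
    simp [smul_eq_mul]
  -- second spatial derivative of ψ(·,t), coordinate i
  have hB2 : ∀ i : Fin d,
      fderiv ℝ (fun y => fderiv ℝ (fun z : Fin d → ℝ =>
          ((Real.sqrt (ρ z t) : ℝ) : ℂ) * Complex.exp (Complex.I * ((S z t : ℝ) : ℂ))) y (Pi.single i 1)) x (Pi.single i 1)
      = ((((fderiv ℝ (fun y => fderiv ℝ (fun z : Fin d → ℝ => Real.sqrt (ρ z t)) y (Pi.single i 1)) x (Pi.single i 1)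
            - Real.sqrt (ρ x t) * (fderiv ℝ (fun z : Fin d → ℝ => S z t) x (Pi.single i 1))^2 : ℝ)) : ℂ)
          + (((2 * fderiv ℝ (fun z : Fin d → ℝ => Real.sqrt (ρ z t)) x (Pi.single i 1)
                * fderiv ℝ (fun z : Fin d → ℝ => S z t) x (Pi.single i 1)
              + Real.sqrt (ρ x t) * fderiv ℝ (fun y => fderiv ℝ (fun z : Fin d → ℝ => S z t) y (Pi.single i 1)) x (Pi.single i 1) : ℝ)) : ℂ)
            * Complex.I)
        * Complex.exp (Complex.I * ((S x t : ℝ) : ℂ)) := by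
    intro i
    rw [hB1 i, fderiv_ab_mul_expI_apply (hFdd i) ((hFd x).fun_mul (hgdd i)) (hgd x), hb i]
    push_cast
    linear_combination (Complex.exp (Complex.I * ((S x t : ℝ) : ℂ))
      * ((Real.sqrt (ρ x t) : ℂ) * ((fderiv ℝ (fun z : Fin d → ℝ => S z t) x (Pi.single i 1) : ℝ) : ℂ)^2)) * hI2
  -- summing over i
  have hsum : (∑ i : Fin d, fderiv ℝ (fun y => fderiv ℝ (fun z : Fin d → ℝ =>
          ((Real.sqrt (ρ z t) : ℝ) : ℂ) * Complex.exp (Complex.I * ((S z t : ℝ) : ℂ))) y (Pi.single i 1)) x (Pi.single i 1))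
      = ((((∑ i : Fin d, (fderiv ℝ (fun y => fderiv ℝ (fun z : Fin d → ℝ => Real.sqrt (ρ z t)) y (Pi.single i 1)) x (Pi.single i 1)
            - Real.sqrt (ρ x t) * (fderiv ℝ (fun z : Fin d → ℝ => S z t) x (Pi.single i 1))^2) : ℝ)) : ℂ)
          + ((((∑ i : Fin d, (2 * fderiv ℝ (fun z : Fin d → ℝ => Real.sqrt (ρ z t)) x (Pi.single i 1)
                * fderiv ℝ (fun z : Fin d → ℝ => S z t) x (Pi.single i 1)
              + Real.sqrt (ρ x t) * fderiv ℝ (fun y => fderiv ℝ (fun z : Fin d → ℝ => S z t) y (Pi.single i 1)) x (Pi.single i 1))) : ℝ)) : ℂ)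
            * Complex.I)
        * Complex.exp (Complex.I * ((S x t : ℝ) : ℂ)) := by
    rw [Finset.sum_congr rfl (fun i _ => hB2 i)]
    push_cast
    rw [← Finset.sum_mul]
    congr 1
    rw [Finset.sum_add_distrib, ← Finset.sum_mul]
  rw [deriv_real_mul_expI hFtd hStd, hsum]
  -- combine the complex expression
  rw [combineC, mul_eq_zero]
  simp only [Complex.exp_ne_zero, or_false]
  rw [splitC]
  -- relate to the Madelung equations
  have hρt2 : deriv (fun s => ρ x s) t
      = 2 * Real.sqrt (ρ x t) * deriv (fun s => Real.sqrt (ρ x s)) t := by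
    have hfun : (fun s => ρ x s) = fun s => Real.sqrt (ρ x s) * Real.sqrt (ρ x s) :=
      funext fun s => (Real.mul_self_sqrt (hρpos x s).le).symm
    rw [hfun, deriv_fun_mul hFtd hFtd]
    ring
  have hρsp : fderiv ℝ (fun y : Fin d → ℝ => ρ y t) x
      = (2 * Real.sqrt (ρ x t)) • fderiv ℝ (fun z : Fin d → ℝ => Real.sqrt (ρ z t)) x := by
    have hfun : (fun y : Fin d → ℝ => ρ y t) = fun y => Real.sqrt (ρ y t) * Real.sqrt (ρ y t) :=
      funext fun y => (Real.mul_self_sqrt (hρpos y t).le).symm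
    rw [hfun, fderiv_fun_mul (hFd x) (hFd x)]
    ext v
    simp [smul_eq_mul]
    ring
  have hterm : ∀ i : Fin d, fderiv ℝ (fun y => ρ y t
        * fderiv ℝ (fun z : Fin d → ℝ => S z t) y (Pi.single i 1)) x (Pi.single i 1)
      = ρ x t * fderiv ℝ (fun y => fderiv ℝ (fun z : Fin d → ℝ => S z t) y (Pi.single i 1)) x (Pi.single i 1)
        + fderiv ℝ (fun z : Fin d → ℝ => S z t) x (Pi.single i 1)
          * (2 * Real.sqrt (ρ x t) * fderiv ℝ (fun z : Fin d → ℝ => Real.sqrt (ρ z t)) x (Pi.single i 1)) := by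
    intro i
    rw [fderiv_fun_mul (hρd x) (hgdd i), hρsp]
    simp [smul_eq_mul]
    try ring
  have e1 : deriv (fun s => ρ x s) t + ∑ i : Fin d, fderiv ℝ (fun y => ρ y t
        * fderiv ℝ (fun z : Fin d → ℝ => S z t) y (Pi.single i 1)) x (Pi.single i 1)
      = (2 * Real.sqrt (ρ x t)) * (deriv (fun s => Real.sqrt (ρ x s)) t
          + (1/2) * ∑ i : Fin d, (2 * fderiv ℝ (fun z : Fin d → ℝ => Real.sqrt (ρ z t)) x (Pi.single i 1)
                * fderiv ℝ (fun z : Fin d → ℝ => S z t) x (Pi.single i 1)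
              + Real.sqrt (ρ x t) * fderiv ℝ (fun y => fderiv ℝ (fun z : Fin d → ℝ => S z t) y (Pi.single i 1)) x (Pi.single i 1))) := by
    rw [hρt2, Finset.sum_congr rfl (fun i _ => hterm i)]
    have h1 : ∑ i : Fin d, (ρ x t * fderiv ℝ (fun y => fderiv ℝ (fun z : Fin d → ℝ => S z t) y (Pi.single i 1)) x (Pi.single i 1)
        + fderiv ℝ (fun z : Fin d → ℝ => S z t) x (Pi.single i 1)
          * (2 * Real.sqrt (ρ x t) * fderiv ℝ (fun z : Fin d → ℝ => Real.sqrt (ρ z t)) x (Pi.single i 1)))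
        = Real.sqrt (ρ x t) * ∑ i : Fin d, (2 * fderiv ℝ (fun z : Fin d → ℝ => Real.sqrt (ρ z t)) x (Pi.single i 1)
                * fderiv ℝ (fun z : Fin d → ℝ => S z t) x (Pi.single i 1)
              + Real.sqrt (ρ x t) * fderiv ℝ (fun y => fderiv ℝ (fun z : Fin d → ℝ => S z t) y (Pi.single i 1)) x (Pi.single i 1)) := by
      rw [Finset.mul_sum]
      refine Finset.sum_congr rfl fun i _ => ?_
      linear_combination (fderiv ℝ (fun y => fderiv ℝ (fun z : Fin d → ℝ => S z t) y (Pi.single i 1)) x (Pi.single i 1)) * hρ0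
    rw [h1]
    ring
  have e2 : -(Real.sqrt (ρ x t) * deriv (fun s => S x s) t)
        + (1/2) * ∑ i : Fin d, (fderiv ℝ (fun y => fderiv ℝ (fun z : Fin d → ℝ => Real.sqrt (ρ z t)) y (Pi.single i 1)) x (Pi.single i 1)
            - Real.sqrt (ρ x t) * (fderiv ℝ (fun z : Fin d → ℝ => S z t) x (Pi.single i 1))^2)
      = -Real.sqrt (ρ x t) * (deriv (fun s => S x s) t
          + (1/2) * ∑ i : Fin d, (fderiv ℝ (fun z : Fin d → ℝ => S z t) x (Pi.single i 1))^2
          - (1/2) * ((∑ i : Fin d, fderiv ℝ (fun y => fderiv ℝ (fun z : Fin d → ℝ => Real.sqrt (ρ z t)) y (Pi.single i 1)) x (Pi.single i 1)) / Real.sqrt (ρ x t))) := by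
    rw [Finset.sum_sub_distrib, ← Finset.mul_sum]
    field_simp
    ring
  constructor
  · rintro ⟨hA, hB⟩
    constructor
    · rw [e1, hB, mul_zero]
    · rw [e2] at hA
      rcases mul_eq_zero.mp hA with h | h
      · exact absurd (neg_eq_zero.mp h) hF0ne
      · exact h
  · rintro ⟨h1, h2⟩
    constructor
    · rw [e2, h2, mul_zero]
    · rw [e1] at h1
      rcases mul_eq_zero.mp h1 with h | h
      · exact absurd h (by positivity)
      · exact h
end
end

section
/- Let ρ : ℝ^d → ℝ be smooth and strictly positive with ∫_{ℝ^d} |∇√ρ|² dx < ∞, and let δρ ∈ C_c^∞(ℝ^d → ℝ) be such that ρ + ε δρ > 0 for all sufficiently small |ε|. Then lim_{ε→0} (1/ε) [ ∫_{ℝ^d} |(1/2)∇ log(ρ + ε δρ)|² (ρ + ε δρ) dx − ∫_{ℝ^d} |(1/2)∇ log ρ|² ρ dx ] = − ∫_{ℝ^d} ((Δ√ρ)/√ρ) δρ dx. -/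
open MeasureTheory Filter Topology ENNReal

noncomputable section

/-- The Fisher-information integrand `|½ ∇ log σ|² σ` of a density `σ`. -/
def fisherIntegrand {d : ℕ} (σ : (Fin d → ℝ) → ℝ) (x : Fin d → ℝ) : ℝ :=
  (∑ i, ((1/2) * pd (fun y => Real.log (σ y)) x i)^2) * σ x


lemma pd_eq_zero_of_not_mem {d : ℕ} {f : (Fin d → ℝ) → ℝ} {x : Fin d → ℝ}
    (hx : x ∉ tsupport f) (i : Fin d) : pd f x i = 0 := by
  have h : f =ᶠ[𝓝 x] 0 := notMem_tsupport_iff_eventuallyEq.1 hx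
  rw [pd, h.fderiv_eq]
  rw [show (0 : (Fin d → ℝ) → ℝ) = (fun _ => 0) from rfl, fderiv_fun_const]
  simp

lemma hasCompactSupport_pd {d : ℕ} {f : (Fin d → ℝ) → ℝ} (hf : HasCompactSupport f)
    (i : Fin d) : HasCompactSupport (fun x => pd f x i) :=
  hf.mono' (fun x hx => by
    simp only [Function.mem_support, ne_eq] at hx
    by_contra hmem
    exact hx (pd_eq_zero_of_not_mem hmem i))

lemma continuous_pd {d : ℕ} {f : (Fin d → ℝ) → ℝ} (hf : ContDiff ℝ (⊤ : ℕ∞) f) (i : Fin d) :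
    Continuous (fun x => pd f x i) :=
  ((hf.fderiv_right (m := (⊤ : ℕ∞)) (by simp)).continuous).clm_apply continuous_const

lemma contDiff_pd {d : ℕ} {f : (Fin d → ℝ) → ℝ} (hf : ContDiff ℝ (⊤ : ℕ∞) f) (i : Fin d) :
    ContDiff ℝ (⊤ : ℕ∞) (fun x => pd f x i) :=
  (hf.fderiv_right (m := (⊤ : ℕ∞)) (by simp)).clm_apply contDiff_const

section slicelemma
variable {n : ℕ} (i : Fin (n+1))

def ins (i : Fin (n+1)) (t : ℝ) (y : Fin n → ℝ) : Fin (n+1) → ℝ :=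
  Fin.insertNth (α := fun _ => ℝ) i t y

lemma ins_eq_add (t : ℝ) (y : Fin n → ℝ) :
    ins i t y = ins i 0 y + t • (Pi.single i 1 : Fin (n+1) → ℝ) := by
  funext j
  rcases eq_or_ne j i with rfl | hj
  · simp [ins, Fin.insertNth_apply_same]
  · obtain ⟨k, hk⟩ := Fin.exists_succAbove_eq hj
    subst hk
    simp [ins, Fin.insertNth_apply_succAbove, Pi.single_eq_of_ne (Fin.succAbove_ne i k)]

lemma continuous_ins : Continuous (fun p : ℝ × (Fin n → ℝ) => ins i p.1 p.2) :=
  Continuous.finInsertNth (A := fun _ => ℝ) i continuous_fst continuous_snd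

lemma integral_pd_eq_zero' (P : (Fin (n+1) → ℝ) → ℝ) (hP : ContDiff ℝ (⊤ : ℕ∞) P)
    (hsupp : HasCompactSupport P) : ∫ x, pd P x i = 0 := by
  set e := MeasurableEquiv.piFinSuccAbove (fun _ : Fin (n+1) => ℝ) i with he
  have hme : MeasurePreserving e.symm volume volume :=
    (MeasureTheory.volume_preserving_piFinSuccAbove (fun _ => ℝ) i).symm e
  have hsymm : ∀ p : ℝ × (Fin n → ℝ), e.symm p = ins i p.1 p.2 := fun _ => rfl
  have hcont : Continuous (fun x => pd P x i) := continuous_pd hP i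
  have hcs : HasCompactSupport (fun x => pd P x i) := hasCompactSupport_pd hsupp i
  have hfun : ∀ y : Fin n → ℝ, (fun s : ℝ => ins i s y)
      = fun s : ℝ => ins i 0 y + s • (Pi.single i 1 : Fin (n+1) → ℝ) :=
    fun y => funext fun s => ins_eq_add i s y
  have hcurve : ∀ (y : Fin n → ℝ) (t : ℝ),
      HasDerivAt (fun s => P (ins i s y)) (pd P (ins i t y) i) t := by
    intro y t
    have h1 : HasDerivAt (fun s : ℝ => ins i 0 y + s • (Pi.single i 1 : Fin (n+1) → ℝ))
        (Pi.single i 1) t := by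
      simpa using ((hasDerivAt_id t).smul_const (Pi.single i (1:ℝ) : Fin (n+1) → ℝ)).const_add
        (ins i 0 y)
    have h2 : HasFDerivAt P (fderiv ℝ P (ins i t y)) (ins i t y) :=
      (hP.differentiable (by simp) (ins i t y)).hasFDerivAt
    have h1' : HasDerivAt (fun s : ℝ => ins i s y) (Pi.single i 1) t := by
      rw [hfun y]; exact h1
    have := h2.comp_hasDerivAt t h1'
    simpa [Function.comp_def, pd] using this
  have hslice : ∀ y : Fin n → ℝ, ∫ t : ℝ, pd P (ins i t y) i = 0 := by
    intro y
    set g : ℝ → ℝ := fun s => P (ins i s y) with hg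
    have hgc : ContDiff ℝ 1 g := by
      have hc : ContDiff ℝ 1 (fun s : ℝ => ins i 0 y + s • (Pi.single i 1 : Fin (n+1) → ℝ)) :=
        contDiff_const.add (contDiff_id.smul contDiff_const)
      have : g = P ∘ (fun s : ℝ => ins i 0 y + s • (Pi.single i 1 : Fin (n+1) → ℝ)) := by
        rw [hg]; rw [show (fun s : ℝ => P (ins i s y)) = P ∘ (fun s : ℝ => ins i s y) from rfl,
          hfun y]
      rw [this]
      exact (hP.of_le (by simp)).comp hc
    have hgs : HasCompactSupport g := by
      refine HasCompactSupport.intro (K := (fun x : Fin (n+1) → ℝ => x i) '' tsupport P)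
        (hsupp.image (continuous_apply i)) ?_
      intro t ht
      by_contra h0
      apply ht
      refine ⟨ins i t y, subset_tsupport _ (by simpa [hg] using h0), ?_⟩
      show (ins i t y) i = t
      simp [ins]
    have hderiv : ∀ t, deriv g t = pd P (ins i t y) i := fun t => (hcurve y t).deriv
    have hdc : Continuous (deriv g) := by
      rw [continuous_congr hderiv]
      exact hcont.comp ((continuous_ins i).comp (continuous_id.prodMk continuous_const))
    have hds : HasCompactSupport (deriv g) := by
      refine hgs.mono' fun t ht => ?_
      by_contra hmem
      have h0 : g =ᶠ[𝓝 t] 0 := notMem_tsupport_iff_eventuallyEq.1 hmem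
      have hz : deriv g t = 0 := by
        rw [h0.deriv_eq, show (0 : ℝ → ℝ) = fun _ => (0:ℝ) from rfl]
        exact deriv_const t 0
      exact ht hz
    have hint : Integrable (deriv g) := hdc.integrable_of_hasCompactSupport hds
    calc ∫ t : ℝ, pd P (ins i t y) i = ∫ t, deriv g t := by
          simp_rw [hderiv]
      _ = (∫ t in Set.Iic 0, deriv g t) + ∫ t in Set.Ioi 0, deriv g t :=
          (intervalIntegral.integral_Iic_add_Ioi hint.integrableOn hint.integrableOn).symm
      _ = g 0 + - g 0 := by
          rw [hgs.integral_Iic_deriv_eq hgc 0, hgs.integral_Ioi_deriv_eq hgc 0]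
      _ = 0 := by ring
  have key : ∫ x, pd P x i = ∫ p : ℝ × (Fin n → ℝ), pd P (e.symm p) i :=
    (hme.integral_comp e.symm.measurableEmbedding (fun x => pd P x i)).symm
  rw [key]
  have hFcont : Continuous (fun p : ℝ × (Fin n → ℝ) => pd P (e.symm p) i) := by
    simp only [hsymm]
    exact hcont.comp (continuous_ins i)
  have hFcs : HasCompactSupport (fun p : ℝ × (Fin n → ℝ) => pd P (e.symm p) i) := by
    have hecont : Continuous (⇑e) :=
      (continuous_apply i).prodMk (continuous_pi fun j => continuous_apply (i.succAbove j))
    refine HasCompactSupport.intro (K := ⇑e '' tsupport (fun x => pd P x i))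
      (hcs.image hecont) ?_
    intro p hp
    by_contra h0
    apply hp
    exact ⟨e.symm p, subset_tsupport _ h0, e.apply_symm_apply p⟩
  have hFint : Integrable (fun p : ℝ × (Fin n → ℝ) => pd P (e.symm p) i) :=
    hFcont.integrable_of_hasCompactSupport hFcs
  rw [Measure.volume_eq_prod] at hFint ⊢
  rw [integral_prod_symm _ hFint]
  simp only [hsymm]
  simp [hslice]

end slicelemma

lemma integral_pd_eq_zero {d : ℕ} (P : (Fin d → ℝ) → ℝ) (hP : ContDiff ℝ (⊤ : ℕ∞) P)
    (hsupp : HasCompactSupport P) (i : Fin d) : ∫ x, pd P x i = 0 := by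
  cases d with
  | zero => exact i.elim0
  | succ n => exact integral_pd_eq_zero' i P hP hsupp

lemma pd_mul {d : ℕ} {f g : (Fin d → ℝ) → ℝ} (hf : ContDiff ℝ (⊤ : ℕ∞) f) (hg : ContDiff ℝ (⊤ : ℕ∞) g)
    (x : Fin d → ℝ) (i : Fin d) :
    pd (fun y => f y * g y) x i = pd f x i * g x + f x * pd g x i := by
  have h := ((hf.differentiable (by simp) x).hasFDerivAt.fun_mul
    (hg.differentiable (by simp) x).hasFDerivAt)
  rw [pd, h.fderiv]
  simp [pd]
  ring

lemma integral_pd_mul {d : ℕ} {f g : (Fin d → ℝ) → ℝ} (hf : ContDiff ℝ (⊤ : ℕ∞) f)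
    (hg : ContDiff ℝ (⊤ : ℕ∞) g) (hgs : HasCompactSupport g) (i : Fin d) :
    ∫ x, f x * pd g x i = - ∫ x, pd f x i * g x := by
  have hprod : ContDiff ℝ (⊤ : ℕ∞) (fun x => f x * g x) := hf.mul hg
  have hps : HasCompactSupport (fun x => f x * g x) := hgs.mul_left
  have h0 : ∫ x, pd (fun y => f y * g y) x i = 0 := integral_pd_eq_zero _ hprod hps i
  have hint1 : Integrable (fun x => pd f x i * g x) :=
    ((continuous_pd hf i).mul hg.continuous).integrable_of_hasCompactSupport hgs.mul_left
  have hint2 : Integrable (fun x => f x * pd g x i) :=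
    (hf.continuous.mul (continuous_pd hg i)).integrable_of_hasCompactSupport
      (hasCompactSupport_pd hgs i).mul_left
  have : (∫ x, pd f x i * g x) + ∫ x, f x * pd g x i = 0 := by
    rw [← integral_add hint1 hint2]
    rw [← h0]
    congr 1
    funext x
    rw [pd_mul hf hg x i]
  linarith

lemma pd_sqrt {d : ℕ} {σ : (Fin d → ℝ) → ℝ} (hσ : ContDiff ℝ (⊤ : ℕ∞) σ) (hpos : ∀ x, 0 < σ x)
    (x : Fin d → ℝ) (i : Fin d) :
    pd (fun y => Real.sqrt (σ y)) x i = pd σ x i / (2 * Real.sqrt (σ x)) := by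
  have h1 : HasFDerivAt σ (fderiv ℝ σ x) x := (hσ.differentiable (by simp) x).hasFDerivAt
  have h2 := (Real.hasDerivAt_sqrt (ne_of_gt (hpos x))).comp_hasFDerivAt x h1
  rw [show (fun y => Real.sqrt (σ y)) = Real.sqrt ∘ σ from rfl, pd, h2.fderiv]
  simp [pd]
  ring

lemma pd_log {d : ℕ} {σ : (Fin d → ℝ) → ℝ} (hσ : ContDiff ℝ (⊤ : ℕ∞) σ) (hpos : ∀ x, 0 < σ x)
    (x : Fin d → ℝ) (i : Fin d) :
    pd (fun y => Real.log (σ y)) x i = pd σ x i / σ x := by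
  have h1 : HasFDerivAt σ (fderiv ℝ σ x) x := (hσ.differentiable (by simp) x).hasFDerivAt
  have h2 := (Real.hasDerivAt_log (ne_of_gt (hpos x))).comp_hasFDerivAt x h1
  rw [show (fun y => Real.log (σ y)) = Real.log ∘ σ from rfl, pd, h2.fderiv]
  simp [pd]
  ring

lemma pd_div {d : ℕ} {f g : (Fin d → ℝ) → ℝ} (hf : ContDiff ℝ (⊤ : ℕ∞) f) (hg : ContDiff ℝ (⊤ : ℕ∞) g)
    (hpos : ∀ x, 0 < g x) (x : Fin d → ℝ) (i : Fin d) :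
    pd (fun y => f y / g y) x i = (pd f x i * g x - f x * pd g x i) / (g x)^2 := by
  have hinv : pd (fun y => (g y)⁻¹) x i = - pd g x i / (g x)^2 := by
    have h1 : HasFDerivAt g (fderiv ℝ g x) x := (hg.differentiable (by simp) x).hasFDerivAt
    have h2 := (hasDerivAt_inv (ne_of_gt (hpos x))).comp_hasFDerivAt x h1
    rw [show (fun y => (g y)⁻¹) = (fun t : ℝ => t⁻¹) ∘ g from rfl, pd, h2.fderiv]
    simp [pd]
    ring
  have hdiv : (fun y => f y / g y) = fun y => f y * (g y)⁻¹ := by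
    funext y; rw [div_eq_mul_inv]
  rw [hdiv, pd_mul (g := fun y => (g y)⁻¹) hf (hg.inv fun y => ne_of_gt (hpos y)), hinv]
  have h := ne_of_gt (hpos x)
  field_simp
  ring

lemma pd_combo {d : ℕ} (ρ δρ : (Fin d → ℝ) → ℝ) (hρ : ContDiff ℝ (⊤ : ℕ∞) ρ)
    (hδρ : ContDiff ℝ (⊤ : ℕ∞) δρ) (ε : ℝ) (x : Fin d → ℝ) (i : Fin d) :
    pd (fun y => ρ y + ε * δρ y) x i = pd ρ x i + ε * pd δρ x i := by
  have h := ((hρ.differentiable (by simp) x).hasFDerivAt.fun_add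
    (((hδρ.differentiable (by simp) x).hasFDerivAt).const_mul ε))
  rw [pd, h.fderiv]
  simp [pd]

lemma fisher_eq {d : ℕ} {σ : (Fin d → ℝ) → ℝ} (hσ : ContDiff ℝ (⊤ : ℕ∞) σ) (hpos : ∀ x, 0 < σ x)
    (x : Fin d → ℝ) :
    fisherIntegrand σ x = ∑ i, (pd σ x i)^2 / (4 * σ x) := by
  rw [fisherIntegrand, Finset.sum_mul]
  refine Finset.sum_congr rfl fun i _ => ?_
  rw [pd_log hσ hpos x i]
  have h := ne_of_gt (hpos x)
  field_simp
  ring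

/-- for a smooth strictly positive `ρ` with finite Fisher
information and a compactly supported smooth perturbation `δρ` keeping the
density positive, the Gâteaux derivative of the Fisher information at `ρ` in
direction `δρ` exists and equals `−∫ (Δ√ρ/√ρ) δρ dx`. -/
theorem fisher_information_gateaux_derivative {d : ℕ}
    (ρ : (Fin d → ℝ) → ℝ) (hρ : ContDiff ℝ (⊤ : ℕ∞) ρ) (hρpos : ∀ x, 0 < ρ x)
    (hFisher : ∫⁻ x, ENNReal.ofReal
      (∑ i, (pd (fun y => Real.sqrt (ρ y)) x i)^2) < ⊤)
    (δρ : (Fin d → ℝ) → ℝ) (hδρ_smooth : ContDiff ℝ (⊤ : ℕ∞) δρ)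
    (hδρ_supp : HasCompactSupport δρ)
    (hpos : ∃ ε₀ > (0:ℝ), ∀ ε : ℝ, |ε| < ε₀ → ∀ x, 0 < ρ x + ε * δρ x) :
    Tendsto (fun ε : ℝ =>
        (1/ε) * ((∫ x, fisherIntegrand (fun y => ρ y + ε * δρ y) x)
                  - ∫ x, fisherIntegrand ρ x))
      (𝓝[≠] (0:ℝ))
      (𝓝 (- ∫ x, (slap (fun y => Real.sqrt (ρ y)) x / Real.sqrt (ρ x)) * δρ x)) := by
  obtain ⟨ε₀, hε₀, hposall⟩ := hpos
  have h0ε₀ : ∀ x, 0 < ρ x + 0 * δρ x := hposall 0 (by simpa using hε₀)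
  set K := tsupport δρ with hKdef
  have hKcomp : IsCompact K := hδρ_supp
  have hKmeas : MeasurableSet K := (isClosed_tsupport δρ).measurableSet
  -- square root of ρ
  have hsρ : ContDiff ℝ (⊤ : ℕ∞) (fun x => Real.sqrt (ρ x)) :=
    contDiff_iff_contDiffAt.2 fun x =>
      (Real.contDiffAt_sqrt (ne_of_gt (hρpos x))).comp x hρ.contDiffAt
  have hsρpos : ∀ x, 0 < Real.sqrt (ρ x) := fun x => Real.sqrt_pos.2 (hρpos x)
  -- main families
  set Gf : ℝ → (Fin d → ℝ) → ℝ := fun ε x =>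
    ∑ i, (pd ρ x i + ε * pd δρ x i)^2 / (4 * (ρ x + ε * δρ x)) with hGfdef
  set Fd : ℝ → (Fin d → ℝ) → ℝ := fun ε x => Gf ε x - Gf 0 x with hFddef
  set Fd' : ℝ → (Fin d → ℝ) → ℝ := fun ε x =>
    ∑ i, ((2 * (pd ρ x i + ε * pd δρ x i) * (1 * pd δρ x i)) * (4 * (ρ x + ε * δρ x))
      - (pd ρ x i + ε * pd δρ x i)^2 * (4 * (1 * δρ x))) / (4 * (ρ x + ε * δρ x))^2
    with hFd'def
  -- vanishing outside K
  have hδρ0 : ∀ x ∉ K, δρ x = 0 := fun x hx => image_eq_zero_of_notMem_tsupport hx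
  have hpdδρ0 : ∀ x ∉ K, ∀ i, pd δρ x i = 0 := fun x hx i => pd_eq_zero_of_not_mem hx i
  have hFzero : ∀ ε, ∀ x ∉ K, Fd ε x = 0 := by
    intro ε x hx
    simp only [hFddef, hGfdef, hδρ0 x hx, hpdδρ0 x hx, mul_zero, add_zero, sub_self]
  have hF'zero : ∀ ε, ∀ x ∉ K, Fd' ε x = 0 := by
    intro ε x hx
    simp only [hFd'def, hδρ0 x hx, hpdδρ0 x hx, mul_zero, add_zero, zero_mul, mul_one,
      sub_self, zero_div, Finset.sum_const_zero]
  -- continuity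
  have hGcont : ∀ ε, |ε| < ε₀ → Continuous (Gf ε) := by
    intro ε hε
    refine continuous_finset_sum _ fun i _ => Continuous.div ?_ ?_ ?_
    · exact (((continuous_pd hρ i).add (continuous_const.mul (continuous_pd hδρ_smooth i))).pow 2)
    · exact continuous_const.mul (hρ.continuous.add (continuous_const.mul hδρ_smooth.continuous))
    · intro x
      have := hposall ε hε x
      positivity
  have hF'cont : ∀ ε, |ε| < ε₀ → Continuous (Fd' ε) := by
    intro ε hε
    refine continuous_finset_sum _ fun i _ => Continuous.div ?_ ?_ ?_
    · exact ((continuous_const.mul ((continuous_pd hρ i).add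
        (continuous_const.mul (continuous_pd hδρ_smooth i))) |>.mul
          (continuous_const.mul (continuous_pd hδρ_smooth i))).mul
        (continuous_const.mul (hρ.continuous.add (continuous_const.mul hδρ_smooth.continuous)))).sub
        ((((continuous_pd hρ i).add (continuous_const.mul (continuous_pd hδρ_smooth i))).pow 2).mul
          (continuous_const.mul (continuous_const.mul hδρ_smooth.continuous)))
    · exact (continuous_const.mul (hρ.continuous.add
        (continuous_const.mul hδρ_smooth.continuous))).pow 2
    · intro x
      have := hposall ε hε x
      positivity
  -- derivative in ε
  have hderivF : ∀ x : Fin d → ℝ, ∀ ε ∈ Metric.ball (0:ℝ) (ε₀/2),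
      HasDerivAt (fun e => Fd e x) (Fd' ε x) ε := by
    intro x ε hε
    have hεlt : |ε| < ε₀ := by
      rw [Metric.mem_ball, Real.dist_eq, sub_zero] at hε
      linarith [abs_nonneg ε]
    have hpos2 : 0 < ρ x + ε * δρ x := hposall ε hεlt x
    have hsum : HasDerivAt (fun e => Gf e x) (Fd' ε x) ε := by
      rw [hGfdef, hFd'def]
      simp only
      refine HasDerivAt.fun_sum fun i _ => ?_
      have hlin : HasDerivAt (fun e : ℝ => pd ρ x i + e * pd δρ x i) (1 * pd δρ x i) ε :=
        ((hasDerivAt_id ε).mul_const _).const_add _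
      have hu : HasDerivAt (fun e : ℝ => (pd ρ x i + e * pd δρ x i)^2)
          (2 * (pd ρ x i + ε * pd δρ x i) ^ 1 * (1 * pd δρ x i)) ε := by
        simpa using hlin.fun_pow 2
      have hv : HasDerivAt (fun e : ℝ => 4 * (ρ x + e * δρ x)) (4 * (1 * δρ x)) ε :=
        (((hasDerivAt_id ε).mul_const _).const_add _).const_mul 4
      have := hu.fun_div hv (ne_of_gt (by positivity))
      convert this using 1
      · rfl
      ring
    have := hsum.sub_const (Gf 0 x)
    exact this
  -- the uniform bound on the compact slab
  set S : Set (ℝ × (Fin d → ℝ)) := (Set.Icc (-(ε₀/2)) (ε₀/2)) ×ˢ K with hSdef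
  have hScomp : IsCompact S := isCompact_Icc.prod hKcomp
  have hSsub : ∀ p ∈ S, 0 < ρ p.2 + p.1 * δρ p.2 := by
    intro p hp
    have h1 := hp.1
    rw [Set.mem_Icc] at h1
    refine hposall p.1 ?_ p.2
    rw [abs_lt]
    constructor <;> linarith [h1.1, h1.2]
  have hF'contOn : ContinuousOn (fun p : ℝ × (Fin d → ℝ) => Fd' p.1 p.2) S := by
    simp only [hFd'def]
    refine continuousOn_finset_sum _ fun i _ => ContinuousOn.div ?_ ?_ ?_
    · refine Continuous.continuousOn ?_
      refine Continuous.sub ?_ ?_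
      · exact ((continuous_const.mul ((continuous_pd hρ i).comp continuous_snd |>.add
          (continuous_fst.mul ((continuous_pd hδρ_smooth i).comp continuous_snd)))).mul
            (continuous_const.mul ((continuous_pd hδρ_smooth i).comp continuous_snd))).mul
          (continuous_const.mul ((hρ.continuous.comp continuous_snd).add
            (continuous_fst.mul (hδρ_smooth.continuous.comp continuous_snd))))
      · exact (((continuous_pd hρ i).comp continuous_snd |>.add
          (continuous_fst.mul ((continuous_pd hδρ_smooth i).comp continuous_snd))).pow 2).mul
          (continuous_const.mul (continuous_const.mul
            (hδρ_smooth.continuous.comp continuous_snd)))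
    · exact Continuous.continuousOn ((continuous_const.mul
        ((hρ.continuous.comp continuous_snd).add
          (continuous_fst.mul (hδρ_smooth.continuous.comp continuous_snd)))).pow 2)
    · intro p hp
      have := hSsub p hp
      positivity
  obtain ⟨C, hC⟩ := hScomp.exists_bound_of_continuousOn hF'contOn
  set bound : (Fin d → ℝ) → ℝ := K.indicator (fun _ => max C 0) with hbounddef
  have h_bound : ∀ᵐ x, ∀ ε ∈ Metric.ball (0:ℝ) (ε₀/2), ‖Fd' ε x‖ ≤ bound x := by
    refine Filter.Eventually.of_forall fun x => fun ε hε => ?_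
    rw [Metric.mem_ball, Real.dist_eq, sub_zero] at hε
    by_cases hx : x ∈ K
    · rw [hbounddef, Set.indicator_of_mem hx]
      have hmem : (ε, x) ∈ S := by
        refine ⟨Set.mem_Icc.2 ⟨?_, ?_⟩, hx⟩ <;> [linarith [abs_lt.1 hε];
          linarith [abs_lt.1 hε]]
      exact (hC _ hmem).trans (le_max_left _ _)
    · rw [hbounddef, Set.indicator_of_notMem hx, hF'zero ε x hx]
      simp
  have bound_int : Integrable bound := by
    rw [hbounddef, integrable_indicator_iff hKmeas]
    exact integrableOn_const hKcomp.measure_lt_top.ne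
  -- integrability and measurability inputs
  have hF0eq : Fd 0 = fun _ => (0:ℝ) := funext fun x => sub_self _
  have hF0int : Integrable (Fd 0) := by
    rw [hF0eq]; exact integrable_zero _ _ _
  have hFmeas : ∀ᶠ ε in 𝓝 (0:ℝ), AEStronglyMeasurable (Fd ε) volume := by
    filter_upwards [Metric.ball_mem_nhds (0:ℝ) hε₀] with ε hε
    rw [Metric.mem_ball, Real.dist_eq, sub_zero] at hε
    exact (((hGcont ε hε).sub (hGcont 0 (by simpa using hε₀)))).aestronglyMeasurable
  have hF'0meas : AEStronglyMeasurable (Fd' 0) volume :=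
    (hF'cont 0 (by simpa using hε₀)).aestronglyMeasurable
  have h_diff : ∀ᵐ x, ∀ ε ∈ Metric.ball (0:ℝ) (ε₀/2),
      HasDerivAt (fun e => Fd e x) (Fd' ε x) ε :=
    Filter.Eventually.of_forall fun x => hderivF x
  obtain ⟨hF'0int, hder⟩ := hasDerivAt_integral_of_dominated_loc_of_deriv_le
    (Metric.ball_mem_nhds (0:ℝ) (half_pos hε₀)) hFmeas hF0int hF'0meas h_bound bound_int h_diff
  -- identification of the integrands
  have hσsmooth : ∀ ε : ℝ, ContDiff ℝ (⊤ : ℕ∞) (fun y => ρ y + ε * δρ y) := fun ε =>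
    hρ.add (contDiff_const.mul hδρ_smooth)
  have hfish : ∀ ε, |ε| < ε₀ →
      (fun x => fisherIntegrand (fun y => ρ y + ε * δρ y) x) = Gf ε := by
    intro ε hε
    funext x
    rw [fisher_eq (hσsmooth ε) (hposall ε hε) x, hGfdef]
    exact Finset.sum_congr rfl fun i _ => by rw [pd_combo ρ δρ hρ hδρ_smooth ε x i]
  have hfish0 : (fun x => fisherIntegrand ρ x) = Gf 0 := by
    funext x
    rw [fisher_eq hρ hρpos x, hGfdef]
    simp
  have hGf0eq : ∀ x, Gf 0 x = ∑ i, (pd (fun y => Real.sqrt (ρ y)) x i)^2 := by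
    intro x
    rw [hGfdef]
    simp only [zero_mul, add_zero]
    refine Finset.sum_congr rfl fun i _ => ?_
    rw [pd_sqrt hρ hρpos x i, div_pow, mul_pow, Real.sq_sqrt (hρpos x).le]
    norm_num
  have hint0 : Integrable (Gf 0) := by
    constructor
    · exact (hGcont 0 (by simpa using hε₀)).aestronglyMeasurable
    · rw [hasFiniteIntegral_iff_ofReal (Filter.Eventually.of_forall fun x => by
        rw [hGf0eq x]; positivity)]
      calc ∫⁻ x, ENNReal.ofReal (Gf 0 x)
          = ∫⁻ x, ENNReal.ofReal (∑ i, (pd (fun y => Real.sqrt (ρ y)) x i)^2) :=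
            lintegral_congr fun x => by rw [hGf0eq x]
        _ < ⊤ := hFisher
  have hFint : ∀ ε, |ε| < ε₀ → Integrable (Fd ε) := by
    intro ε hε
    refine Continuous.integrable_of_hasCompactSupport
      ((hGcont ε hε).sub (hGcont 0 (by simpa using hε₀))) ?_
    refine hδρ_supp.mono' fun x hx => ?_
    by_contra hxK
    exact hx (hFzero ε x hxK)
  have hkey : ∀ ε, |ε| < ε₀ →
      (∫ x, fisherIntegrand (fun y => ρ y + ε * δρ y) x) - (∫ x, fisherIntegrand ρ x)
        = ∫ x, Fd ε x := by
    intro ε hε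
    rw [hfish ε hε, hfish0]
    have hGeq : Gf ε = fun x => Gf 0 x + Fd ε x := funext fun x => by
      rw [hFddef]; ring
    rw [hGeq, integral_add hint0 (hFint ε hε)]
    ring
  -- the value of the derivative
  have hsqrtD : ContDiff ℝ (⊤ : ℕ∞) (fun x => δρ x / Real.sqrt (ρ x)) :=
    hδρ_smooth.div hsρ fun x => ne_of_gt (hsρpos x)
  have hhs : HasCompactSupport (fun x => δρ x / Real.sqrt (ρ x)) := by
    refine hδρ_supp.mono fun x hx => ?_
    simp only [Function.mem_support] at hx ⊢
    intro h0
    exact hx (by rw [h0, zero_div])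
  have hF'0eq : ∀ x, Fd' 0 x = ∑ i, pd (fun y => Real.sqrt (ρ y)) x i
      * pd (fun y => δρ y / Real.sqrt (ρ y)) x i := by
    intro x
    rw [hFd'def]
    refine Finset.sum_congr rfl fun i _ => ?_
    rw [pd_div hδρ_smooth hsρ hsρpos x i, pd_sqrt hρ hρpos x i]
    have hsne : Real.sqrt (ρ x) ≠ 0 := ne_of_gt (hsρpos x)
    have hsq : Real.sqrt (ρ x) ^ 2 = ρ x := Real.sq_sqrt (hρpos x).le
    set s := Real.sqrt (ρ x) with hs
    rw [← hsq]
    field_simp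
    ring
  have hint_term : ∀ i : Fin d, Integrable (fun x => pd (fun y => Real.sqrt (ρ y)) x i
      * pd (fun y => δρ y / Real.sqrt (ρ y)) x i) := fun i =>
    Continuous.integrable_of_hasCompactSupport
      ((continuous_pd hsρ i).mul (continuous_pd hsqrtD i))
      (hasCompactSupport_pd hhs i).mul_left
  have hint_term2 : ∀ i : Fin d, Integrable (fun x =>
      pd (fun y => pd (fun z => Real.sqrt (ρ z)) y i) x i * (δρ x / Real.sqrt (ρ x))) := fun i =>
    Continuous.integrable_of_hasCompactSupport
      ((continuous_pd (contDiff_pd hsρ i) i).mul hsqrtD.continuous)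
      hhs.mul_left
  have hval : ∫ x, Fd' 0 x
      = - ∫ x, (slap (fun y => Real.sqrt (ρ y)) x / Real.sqrt (ρ x)) * δρ x := by
    calc ∫ x, Fd' 0 x
        = ∫ x, ∑ i, pd (fun y => Real.sqrt (ρ y)) x i
            * pd (fun y => δρ y / Real.sqrt (ρ y)) x i := by
          exact integral_congr_ae (Filter.Eventually.of_forall fun x => hF'0eq x)
      _ = ∑ i, ∫ x, pd (fun y => Real.sqrt (ρ y)) x i
            * pd (fun y => δρ y / Real.sqrt (ρ y)) x i :=
          integral_finset_sum _ fun i _ => hint_term i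
      _ = ∑ i, - ∫ x, pd (fun y => pd (fun z => Real.sqrt (ρ z)) y i) x i
            * (δρ x / Real.sqrt (ρ x)) := by
          refine Finset.sum_congr rfl fun i _ => ?_
          exact integral_pd_mul (contDiff_pd hsρ i) hsqrtD hhs i
      _ = - ∑ i, ∫ x, pd (fun y => pd (fun z => Real.sqrt (ρ z)) y i) x i
            * (δρ x / Real.sqrt (ρ x)) := by rw [← Finset.sum_neg_distrib]
      _ = - ∫ x, ∑ i, pd (fun y => pd (fun z => Real.sqrt (ρ z)) y i) x i
            * (δρ x / Real.sqrt (ρ x)) := by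
          rw [integral_finset_sum _ fun i _ => hint_term2 i]
      _ = - ∫ x, (slap (fun y => Real.sqrt (ρ y)) x / Real.sqrt (ρ x)) * δρ x := by
          congr 1
          refine integral_congr_ae (Filter.Eventually.of_forall fun x => ?_)
          show (∑ i, pd (fun y => pd (fun z => Real.sqrt (ρ z)) y i) x i
            * (δρ x / Real.sqrt (ρ x)))
            = (slap (fun y => Real.sqrt (ρ y)) x / Real.sqrt (ρ x)) * δρ x
          rw [← Finset.sum_mul]
          have hslap : slap (fun y => Real.sqrt (ρ y)) x
              = ∑ i, pd (fun y => pd (fun z => Real.sqrt (ρ z)) y i) x i := rfl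
          rw [← hslap]
          ring
  -- final limit argument
  have hφ0 : ∫ x, Fd 0 x = 0 := by rw [hF0eq]; simp
  rw [← hval]
  have hslope := hasDerivAt_iff_tendsto_slope.1 hder
  refine Filter.Tendsto.congr' ?_ hslope
  have hball : ∀ᶠ ε : ℝ in 𝓝[≠] 0, |ε| < ε₀ :=
    eventually_nhdsWithin_of_eventually_nhds (by
      filter_upwards [Metric.ball_mem_nhds (0:ℝ) hε₀] with ε hε
      rwa [Metric.mem_ball, Real.dist_eq, sub_zero] at hε)
  filter_upwards [hball, self_mem_nhdsWithin] with ε hε hne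
  rw [slope_def_field]
  rw [hφ0, sub_zero, sub_zero, ← hkey ε hε]
  ring
end
end
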